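/- arXiv:math/0502194 — 3 statements merged into one kernel-verified Lean document; each statement's English description precedes it below -/
import Mathlib

section
/- Let p ≥ 5 and l be distinct primes with p dividing l − 1, and let α be an integer whose class in F_l is not a p-th power. Then the equation x_1^p + l·x_2^p + l^2·x_3^p + ... + l^{p−1}·x_p^p = α·x_0^p has no nontrivial solution in the l-adic field Q_l. -/
open Finset

-- l ∣ x ↔ toZMod x = 0
lemma aux_dvd_iff (l : ℕ) [Fact l.Prime] (x : ℤ_[l]) :
    (l : ℤ_[l]) ∣ x ↔ PadicInt.toZMod x = 0 := by
  rw [← RingHom.mem_ker, PadicInt.ker_toZMod, PadicInt.maximalIdeal_eq_span_p,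
    Ideal.mem_span_singleton]

lemma aux_key (p l : ℕ) [Fact p.Prime] [Fact l.Prime] (α : ℤ)
    (hα : ¬ ∃ b : ZMod l, b ^ p = (α : ZMod l)) (w : ℕ → ℤ_[l])
    (hw : ∑ i ∈ Finset.range p, (l : ℤ_[l]) ^ i * w (i+1) ^ p = (α : ℤ_[l]) * w 0 ^ p) :
    ∀ k ≤ p, (l : ℤ_[l]) ∣ w k := by
  have hp0 : 0 < p := (Fact.out : p.Prime).pos
  -- image in ZMod l
  have hmod : (PadicInt.toZMod (w 1)) ^ p = (α : ZMod l) * (PadicInt.toZMod (w 0)) ^ p := by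
    have := congrArg (PadicInt.toZMod : ℤ_[l] →+* ZMod l) hw
    simp only [map_sum, map_mul, map_pow, map_natCast, map_intCast, ZMod.natCast_self] at this
    rwa [Finset.sum_eq_single_of_mem 0 (Finset.mem_range.2 hp0) (by
      intro i _ hi
      rw [zero_pow hi, zero_mul]), pow_zero, one_mul] at this
  have h0 : PadicInt.toZMod (w 0) = 0 := by
    by_contra hb
    exact hα ⟨PadicInt.toZMod (w 1) * (PadicInt.toZMod (w 0))⁻¹, by
      rw [mul_pow, hmod, mul_assoc, ← mul_pow, mul_inv_cancel₀ hb, one_pow, mul_one]⟩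
  have h1 : PadicInt.toZMod (w 1) = 0 := by
    have := hmod
    rw [h0, zero_pow hp0.ne', mul_zero, pow_eq_zero_iff hp0.ne'] at this
    exact this
  intro k
  induction k using Nat.strong_induction_on with
  | _ k ih =>
    intro hk
    match k, hk with
    | 0, _ => exact (aux_dvd_iff l _).2 h0
    | 1, _ => exact (aux_dvd_iff l _).2 h1
    | (m+2), hk =>
      -- all previous are divisible
      have hprev : ∀ j < m + 2, (l : ℤ_[l]) ∣ w j := fun j hj =>
        ih j hj (le_trans (le_of_lt hj) hk)
      have hm1 : m + 1 ∈ Finset.range p := Finset.mem_range.2 (by omega)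
      have heq : (l : ℤ_[l]) ^ (m+1) * w (m+2) ^ p
          = (α : ℤ_[l]) * w 0 ^ p - ∑ i ∈ (Finset.range p).erase (m+1),
              (l : ℤ_[l]) ^ i * w (i+1) ^ p := by
        rw [← hw, ← Finset.add_sum_erase _ _ hm1]; ring
      have hdvd : (l : ℤ_[l]) ^ (m+2) ∣ (l : ℤ_[l]) ^ (m+1) * w (m+2) ^ p := by
        rw [heq]
        apply dvd_sub
        · obtain ⟨c, hc⟩ := hprev 0 (by omega)
          rw [hc]
          calc (l : ℤ_[l]) ^ (m+2) ∣ (l : ℤ_[l]) ^ p := pow_dvd_pow _ hk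
          _ ∣ (α : ℤ_[l]) * ((l : ℤ_[l]) * c) ^ p := by
              rw [mul_pow]; exact Dvd.dvd.mul_left (Dvd.dvd.mul_right dvd_rfl _) _
        · apply Finset.dvd_sum
          intro i hi
          rcases Finset.mem_erase.1 hi with ⟨hne, hir⟩
          rcases lt_or_gt_of_ne hne with hlt | hgt
          · -- i < m+1, so w (i+1) divisible by l
            obtain ⟨c, hc⟩ := hprev (i+1) (by omega)
            rw [hc, mul_pow]
            have : (l : ℤ_[l]) ^ (m+2) ∣ (l : ℤ_[l]) ^ i * (l : ℤ_[l]) ^ p := by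
              rw [← pow_add]; exact pow_dvd_pow _ (by omega)
            calc (l : ℤ_[l]) ^ (m+2) ∣ (l : ℤ_[l]) ^ i * (l : ℤ_[l]) ^ p := this
            _ ∣ (l : ℤ_[l]) ^ i * ((l : ℤ_[l]) ^ p * c ^ p) := by
                exact mul_dvd_mul_left _ (dvd_mul_right _ _)
          · exact Dvd.dvd.mul_right (pow_dvd_pow _ (by omega)) _
      -- cancel l^(m+1)
      have hl0 : (l : ℤ_[l]) ≠ 0 := Nat.cast_ne_zero.2 (Fact.out : l.Prime).pos.ne'
      obtain ⟨c, hc⟩ := hdvd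
      have : w (m+2) ^ p = (l : ℤ_[l]) * c := by
        have h2 : (l : ℤ_[l]) ^ (m+1) * (w (m+2) ^ p) = (l : ℤ_[l]) ^ (m+1) * ((l : ℤ_[l]) * c) := by
          rw [hc]; ring
        exact mul_left_cancel₀ (pow_ne_zero _ hl0) h2
      exact (PadicInt.prime_p).dvd_of_dvd_pow (⟨c, this⟩ : (l : ℤ_[l]) ∣ w (m+2) ^ p)

/-- Let `p ≥ 5` and `l` be distinct primes with `p ∣ l - 1`, and let `α` be an
integer whose class in `F_l` is not a `p`-th power. Then the equation
`x 1 ^ p + l * x 2 ^ p + ⋯ + l ^ (p-1) * x p ^ p = α * x 0 ^ p` has no nontrivial solution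
in the `l`-adic field `ℚ_[l]`. -/
theorem stmt_0 (p l : ℕ) [Fact p.Prime] [Fact l.Prime] (hp5 : 5 ≤ p) (hpl : p ≠ l)
    (hdvd : p ∣ l - 1) (α : ℤ) (hα : ¬ ∃ b : ZMod l, b ^ p = (α : ZMod l))
    (x : Fin (p + 1) → ℚ_[l])
    (hx : ∑ i : Fin p, (l : ℚ_[l]) ^ (i : ℕ) * x i.succ ^ p = (α : ℚ_[l]) * x 0 ^ p) :
    x = 0 := by
  by_contra hne
  obtain ⟨i₁, hi₁⟩ := Function.ne_iff.1 hne
  obtain ⟨i₀, -, hmax⟩ := Finset.exists_max_image Finset.univ (fun i => ‖x i‖)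
    ⟨i₁, Finset.mem_univ i₁⟩
  have hx0 : x i₀ ≠ 0 := by
    intro h
    have := hmax i₁ (Finset.mem_univ i₁)
    rw [h, norm_zero] at this
    exact hi₁ (norm_le_zero_iff.1 this)
  set v₀ : ℤ := (x i₀).valuation with hv₀
  set c : ℚ_[l] := (l : ℚ_[l]) ^ (-v₀) with hc
  have hl1 : (1:ℝ) < (l:ℝ) := by exact_mod_cast (Fact.out : l.Prime).one_lt
  have hl0 : (l:ℝ) ≠ 0 := by positivity
  have hnc : ‖c‖ = (l : ℝ) ^ v₀ := by
    rw [hc, Padic.norm_p_zpow, neg_neg]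
  have hni₀ : ‖c * x i₀‖ = 1 := by
    rw [norm_mul, hnc, Padic.norm_eq_zpow_neg_valuation hx0, ← hv₀, ← zpow_add₀ hl0, add_neg_cancel,
      zpow_zero]
  have hle : ∀ i, ‖c * x i‖ ≤ 1 := by
    intro i
    rw [norm_mul]
    calc ‖c‖ * ‖x i‖ ≤ ‖c‖ * ‖x i₀‖ :=
          mul_le_mul_of_nonneg_left (hmax i (Finset.mem_univ i)) (norm_nonneg c)
    _ = 1 := by rw [← norm_mul]; exact hni₀
  set z : Fin (p+1) → ℤ_[l] := fun i => ⟨c * x i, hle i⟩ with hz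
  have hzeq : ∑ i : Fin p, (l : ℤ_[l]) ^ (i : ℕ) * z i.succ ^ p = (α : ℤ_[l]) * z 0 ^ p := by
    have : ((∑ i : Fin p, (l : ℤ_[l]) ^ (i : ℕ) * z i.succ ^ p : ℤ_[l]) : ℚ_[l])
        = (((α : ℤ_[l]) * z 0 ^ p : ℤ_[l]) : ℚ_[l]) := by
      rw [show ((∑ i : Fin p, (l : ℤ_[l]) ^ (i : ℕ) * z i.succ ^ p : ℤ_[l]) : ℚ_[l])
        = ∑ i : Fin p, (((l : ℤ_[l]) ^ (i : ℕ) * z i.succ ^ p : ℤ_[l]) : ℚ_[l]) from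
        map_sum (PadicInt.Coe.ringHom) _ _]
      push_cast
      calc ∑ i : Fin p, (l : ℚ_[l]) ^ (i : ℕ) * (c * x i.succ) ^ p
          = (∑ i : Fin p, (l : ℚ_[l]) ^ (i : ℕ) * x i.succ ^ p) * c ^ p := by
            rw [Finset.sum_mul]; congr 1; ext i; ring
        _ = (α : ℚ_[l]) * (c * x 0) ^ p := by rw [hx]; ring
    exact Subtype.coe_injective this
  set w : ℕ → ℤ_[l] := fun n => if h : n < p + 1 then z ⟨n, h⟩ else 0 with hwdef
  have hw : ∑ i ∈ Finset.range p, (l : ℤ_[l]) ^ i * w (i+1) ^ p = (α : ℤ_[l]) * w 0 ^ p := by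
    rw [← Fin.sum_univ_eq_sum_range (fun n => (l : ℤ_[l]) ^ n * w (n+1) ^ p) p]
    have h0 : w 0 = z 0 := by
      rw [hwdef]; simp only [dif_pos (Nat.succ_pos p)]
      congr 1
    rw [h0, ← hzeq]
    apply Finset.sum_congr rfl
    intro i _
    congr 2
    rw [hwdef]
    simp only [dif_pos (Nat.succ_lt_succ i.2)]
    congr 1
  have hdvd0 : (l : ℤ_[l]) ∣ z i₀ := by
    have := aux_key p l α hα w hw i₀.1 (Nat.lt_succ_iff.1 i₀.2)
    rw [hwdef] at this
    simp only [dif_pos i₀.2] at this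
    rwa [Fin.eta] at this
  have : ‖z i₀‖ < 1 := (PadicInt.norm_lt_one_iff_dvd _).2 hdvd0
  rw [show ‖z i₀‖ = ‖c * x i₀‖ from rfl, hni₀] at this
  exact lt_irrefl _ this
end

section
/- Let p, l be primes with p ∣ (l−1), and α ∈ ℤ with α mod l not a p-th power in F_l. Then any solution (x_0, ..., x_p) in Z_l of x_1^p + l·x_2^p + ... + l^{p−1}·x_p^p = α·x_0^p must satisfy l ∣ x_i for all i; consequently the only solution in Z_l is the trivial one. -/
/-!
Reducing the equation modulo `l` leaves `x₁ ^ p ≡ α x₀ ^ p`; as `α` is not a `p`-th power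
modulo `l`, this forces `l ∣ x₀`. Then, going up the indices, `l ^ i x_{i+1} ^ p` is the only term
of the equation not already divisible by `l ^ (i + 1)`, so `l ∣ x_{i+1}`. Dividing every coordinate
by `l` gives a new solution, so the coordinates are divisible by every power of `l`, hence vanish
by Krull's intersection theorem.
-/

open Finset

section DiagonalForm

variable {R : Type*} [CommRing R] {p : ℕ} {π α : R} {x : Fin (p + 1) → R}

def IsDiagonalSolution (p : ℕ) (π α : R) (x : Fin (p + 1) → R) : Prop :=
  ∑ i : Fin p, π ^ (i : ℕ) * x i.succ ^ p = α * x 0 ^ p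

theorem IsDiagonalSolution.term_add_sum_erase (hx : IsDiagonalSolution p π α x) (i : Fin p) :
    π ^ (i : ℕ) * x i.succ ^ p + ∑ j ∈ univ.erase i, π ^ (j : ℕ) * x j.succ ^ p = α * x 0 ^ p :=
  (add_sum_erase _ _ (mem_univ i)).trans hx

/- `hα` says, in homogeneous form, that `α` is not a `p`-th power modulo `π`. -/
theorem IsDiagonalSolution.dvd_zero (hx : IsDiagonalSolution p π α x) (hp : 0 < p)
    (hα : ∀ u v : R, π ∣ u ^ p - α * v ^ p → π ∣ v) : π ∣ x 0 := by
  set i₀ : Fin p := ⟨0, hp⟩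
  have hsplit : x i₀.succ ^ p - α * x 0 ^ p
      = -∑ j ∈ univ.erase i₀, π ^ (j : ℕ) * x j.succ ^ p := by
    rw [← hx.term_add_sum_erase i₀]
    simp only [i₀, pow_zero, one_mul]
    ring
  refine hα _ _ (hsplit ▸ (dvd_neg.mpr (dvd_sum fun j hj ↦ ?_)))
  have hj : (j : ℕ) ≠ 0 := fun h ↦ (mem_erase.mp hj).1 (Fin.ext h)
  exact (dvd_pow_self π hj).mul_right _

theorem IsDiagonalSolution.dvd_succ [IsDomain R] (hx : IsDiagonalSolution p π α x)
    (hπ : Prime π) (i : Fin p) (hprev : ∀ j < i.succ, π ∣ x j) : π ∣ x i.succ := by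
  have hi : (i : ℕ) + 1 ≤ p := i.isLt
  have hpow_dvd {j : Fin (p + 1)} (hj : j < i.succ) : π ^ ((i : ℕ) + 1) ∣ x j ^ p :=
    (pow_dvd_pow π hi).trans (pow_dvd_pow_of_dvd (hprev j hj) p)
  have hterm : π ^ ((i : ℕ) + 1) ∣ π ^ (i : ℕ) * x i.succ ^ p := by
    rw [eq_sub_of_add_eq (hx.term_add_sum_erase i)]
    refine dvd_sub ((hpow_dvd (Fin.succ_pos i)).mul_left _) (dvd_sum fun j hj ↦ ?_)
    rcases lt_or_gt_of_ne (mem_erase.mp hj).1 with hlt | hgt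
    · exact (hpow_dvd (Fin.succ_lt_succ_iff.mpr hlt)).mul_left _
    · exact (pow_dvd_pow π hgt).mul_right _
  rw [pow_succ, mul_dvd_mul_iff_left (pow_ne_zero _ hπ.ne_zero)] at hterm
  exact hπ.dvd_of_dvd_pow hterm

theorem IsDiagonalSolution.dvd [IsDomain R] (hx : IsDiagonalSolution p π α x) (hπ : Prime π)
    (hp : 0 < p) (hα : ∀ u v : R, π ∣ u ^ p - α * v ^ p → π ∣ v) (j : Fin (p + 1)) :
    π ∣ x j := by
  induction j using WellFoundedLT.induction with
  | ind j ih =>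
    cases j using Fin.cases with
    | zero => exact hx.dvd_zero hp hα
    | succ i => exact hx.dvd_succ hπ i ih

theorem IsDiagonalSolution.of_smul [IsDomain R] {y : Fin (p + 1) → R}
    (hy : IsDiagonalSolution p π α (π • y)) (hπ : π ≠ 0) : IsDiagonalSolution p π α y := by
  refine mul_left_cancel₀ (pow_ne_zero p hπ) ?_
  simp only [IsDiagonalSolution, Pi.smul_apply, smul_eq_mul, mul_pow] at hy
  rw [mul_sum, ← mul_left_comm, ← hy]
  exact sum_congr rfl fun i _ ↦ by ring

theorem IsDiagonalSolution.pow_dvd [IsDomain R] (hx : IsDiagonalSolution p π α x)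
    (hπ : Prime π) (hp : 0 < p) (hα : ∀ u v : R, π ∣ u ^ p - α * v ^ p → π ∣ v) (n : ℕ)
    (j : Fin (p + 1)) : π ^ n ∣ x j := by
  induction n generalizing x with
  | zero => simp
  | succ n ih =>
    choose y hy using hx.dvd hπ hp hα
    have hxy : x = π • y := funext hy
    rw [hxy] at hx
    rw [hy j, pow_succ' π n]
    exact mul_dvd_mul_left π (ih (hx.of_smul hπ.ne_zero))

theorem eq_zero_of_forall_pow_dvd [IsNoetherianRing R] [IsDomain R] {a : R} (hπ : ¬IsUnit π)
    (h : ∀ n : ℕ, π ^ n ∣ a) : a = 0 := by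
  have hmem : a ∈ ⨅ n : ℕ, Ideal.span {π} ^ n := by
    simpa only [Ideal.mem_iInf, Ideal.span_singleton_pow, Ideal.mem_span_singleton] using h
  rwa [Ideal.iInf_pow_eq_bot_of_isDomain _ (by rwa [Ne, Ideal.span_singleton_eq_top]),
    Ideal.mem_bot] at hmem

theorem IsDiagonalSolution.eq_zero [IsNoetherianRing R] [IsDomain R]
    (hx : IsDiagonalSolution p π α x) (hπ : Prime π) (hp : 0 < p)
    (hα : ∀ u v : R, π ∣ u ^ p - α * v ^ p → π ∣ v) : x = 0 :=
  funext fun j ↦ eq_zero_of_forall_pow_dvd hπ.not_isUnit fun n ↦ hx.pow_dvd hπ hp hα n j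

end DiagonalForm

namespace PadicInt

variable {l : ℕ} [Fact l.Prime]

theorem toZMod_eq_zero_iff (z : ℤ_[l]) : toZMod z = 0 ↔ (l : ℤ_[l]) ∣ z := by
  rw [← RingHom.mem_ker, ker_toZMod, maximalIdeal_eq_span_p, Ideal.mem_span_singleton]

theorem dvd_of_dvd_pow_sub_mul_pow {p : ℕ} {a : ℤ_[l]} (ha : ¬∃ b : ZMod l, b ^ p = toZMod a)
    (u v : ℤ_[l]) (h : (l : ℤ_[l]) ∣ u ^ p - a * v ^ p) : (l : ℤ_[l]) ∣ v := by
  by_contra hv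
  rw [← toZMod_eq_zero_iff] at h hv
  rw [map_sub, map_mul, map_pow, map_pow, sub_eq_zero] at h
  refine ha ⟨toZMod u / toZMod v, ?_⟩
  rw [div_pow, h, mul_div_cancel_right₀ _ (pow_ne_zero p hv)]

end PadicInt

theorem stmt_4_general (p l : ℕ) [Fact p.Prime] [Fact l.Prime]
    (α : ℤ) (hα : ¬ ∃ b : ZMod l, b ^ p = (α : ZMod l))
    (x : Fin (p + 1) → ℤ_[l])
    (hx : ∑ i : Fin p, (l : ℤ_[l]) ^ (i : ℕ) * x i.succ ^ p = (α : ℤ_[l]) * x 0 ^ p) :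
    (∀ i, (l : ℤ_[l]) ∣ x i) ∧ x = 0 := by
  have hx : IsDiagonalSolution p (l : ℤ_[l]) α x := hx
  have hα' := PadicInt.dvd_of_dvd_pow_sub_mul_pow (p := p) (a := (α : ℤ_[l])) (by simpa using hα)
  have hp : 0 < p := (Fact.out : p.Prime).pos
  exact ⟨hx.dvd PadicInt.prime_p hp hα', hx.eq_zero PadicInt.prime_p hp hα'⟩

/-- Let `p, l` be primes with `p ∣ l - 1`, and `α ∈ ℤ` with `α mod l` not a
`p`-th power in `F_l`. Then any solution `(x 0, …, x p)` in `ℤ_[l]` of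
`x 1 ^ p + l * x 2 ^ p + ⋯ + l ^ (p-1) * x p ^ p = α * x 0 ^ p` satisfies `l ∣ x i` for
all `i`; consequently the only solution in `ℤ_[l]` is the trivial one. -/
theorem stmt_4 (p l : ℕ) [Fact p.Prime] [Fact l.Prime] (hdvd : p ∣ l - 1)
    (α : ℤ) (hα : ¬ ∃ b : ZMod l, b ^ p = (α : ZMod l))
    (x : Fin (p + 1) → ℤ_[l])
    (hx : ∑ i : Fin p, (l : ℤ_[l]) ^ (i : ℕ) * x i.succ ^ p = (α : ℤ_[l]) * x 0 ^ p) :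
    (∀ i, (l : ℤ_[l]) ∣ x i) ∧ x = 0 :=
  stmt_4_general p l α hα x hx
end

section
/- Let p, l be primes with p ∣ (l−1) and let α ∈ Z_l^* be a unit which is not a p-th power. Then the diagonal form x_1^p + l·x_2^p + ... + l^{p−1}·x_p^p in p variables over Q_l represents α only trivially; equivalently, α is not represented by the form over Q_l. -/
/-!
The `i`-th term `l ^ i * x_i ^ p` has valuation `i + p * v(x_i)`, so the valuations of the nonzero
terms are pairwise distinct modulo `p`. By the ultrametric inequality one term dominates all the
others, and it must have norm `|α| = 1`; this forces `i = 0` and `x_0` to be a unit with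
`|x_0 ^ p - α| < 1`. Since `l ∤ p`, Hensel's lemma then lifts `x_0` to a `p`-th root of `α`.
-/

open Finset Polynomial

theorem IsUltrametricDist.exists_norm_sum_sub_lt {E ι : Type*} [NormedAddCommGroup E]
    [IsUltrametricDist E] [Fintype ι] {f : ι → E}
    (hf : ∀ i j, f i ≠ 0 → ‖f i‖ = ‖f j‖ → i = j) (h : ∑ i, f i ≠ 0) :
    ∃ i, ‖∑ j, f j - f i‖ < ‖f i‖ := by
  classical
  have : Nonempty ι := by
    by_contra hι
    simp [not_nonempty_iff.mp hι] at h
  obtain ⟨i, -, hmax⟩ := Finset.exists_max_image univ (fun i ↦ ‖f i‖) univ_nonempty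
  have hfi : f i ≠ 0 := fun hfi ↦ h <| sum_eq_zero fun j _ ↦
    norm_le_zero_iff.mp (by simpa [hfi] using hmax j (mem_univ j))
  have hlt : ∀ j ∈ univ.erase i, ‖f j‖ < ‖f i‖ := fun j hj ↦
    (hmax j (mem_univ j)).lt_of_ne fun hji ↦ ne_of_mem_erase hj (hf i j hfi hji.symm).symm
  refine ⟨i, ?_⟩
  rw [← sum_erase_eq_sub (mem_univ i)]
  obtain ⟨k, hk, hle⟩ := IsUltrametricDist.exists_norm_finsetSum_le (univ.erase i) f
  rcases (univ.erase i).eq_empty_or_nonempty with hemp | hne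
  · simpa [hemp] using hfi
  · exact hle.trans_lt (hlt k (hk hne))

theorem Int.eq_and_eq_of_add_mul_eq {n i j : ℕ} (hi : i < n) (hj : j < n) {a b : ℤ}
    (h : i + n * a = j + n * b) : i = j ∧ a = b := by
  have hij : (i : ℤ) = j := by
    have := congrArg (· % (n : ℤ)) h
    simp only [Int.add_mul_emod_self_left] at this
    rwa [Int.emod_eq_of_lt (by omega) (by omega), Int.emod_eq_of_lt (by omega) (by omega)] at this
  refine ⟨by exact_mod_cast hij, ?_⟩
  rw [hij, add_right_inj] at h
  exact mul_left_cancel₀ (by omega) h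

theorem Padic.valuation_natCast_pow_mul_pow {l : ℕ} [Fact l.Prime] {x : ℚ_[l]} (hx : x ≠ 0)
    (i n : ℕ) : ((l : ℚ_[l]) ^ i * x ^ n).valuation = i + n * x.valuation := by
  have hl : (l : ℚ_[l]) ≠ 0 := Nat.cast_ne_zero.mpr (Fact.out : l.Prime).ne_zero
  rw [valuation_mul (pow_ne_zero _ hl) (pow_ne_zero _ hx), valuation_pow, valuation_pow,
    valuation_p, mul_one]

theorem Padic.valuation_eq_of_norm_eq {l : ℕ} [Fact l.Prime] {x y : ℚ_[l]} (hx : x ≠ 0)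
    (hy : y ≠ 0) (h : ‖x‖ = ‖y‖) : x.valuation = y.valuation := by
  have hl : (1 : ℝ) < l := mod_cast (Fact.out : l.Prime).one_lt
  rw [norm_eq_zpow_neg_valuation hx, norm_eq_zpow_neg_valuation hy,
    zpow_right_inj₀ (by positivity) hl.ne', neg_inj] at h
  exact h

theorem Padic.eq_and_valuation_eq_of_norm_natCast_pow_mul_pow_eq {l n i j : ℕ} [Fact l.Prime]
    (hi : i < n) (hj : j < n) {x y : ℚ_[l]} (hx : x ≠ 0) (hy : y ≠ 0)
    (h : ‖(l : ℚ_[l]) ^ i * x ^ n‖ = ‖(l : ℚ_[l]) ^ j * y ^ n‖) :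
    i = j ∧ x.valuation = y.valuation := by
  have hl : (l : ℚ_[l]) ≠ 0 := Nat.cast_ne_zero.mpr (Fact.out : l.Prime).ne_zero
  have := valuation_eq_of_norm_eq (by positivity) (by positivity) h
  rw [valuation_natCast_pow_mul_pow hx, valuation_natCast_pow_mul_pow hy] at this
  exact Int.eq_and_eq_of_add_mul_eq hi hj this

theorem Padic.eq_zero_and_norm_eq_one_of_norm_natCast_pow_mul_pow_eq_one {l n i : ℕ}
    [Fact l.Prime] (hi : i < n) {x : ℚ_[l]} (h : ‖(l : ℚ_[l]) ^ i * x ^ n‖ = 1) :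
    i = 0 ∧ ‖x‖ = 1 := by
  have hx : x ≠ 0 := by rintro rfl; simp [(Nat.zero_lt_of_lt hi).ne'] at h
  obtain ⟨rfl, hv⟩ := eq_and_valuation_eq_of_norm_natCast_pow_mul_pow_eq hi
    (Nat.zero_lt_of_lt hi) hx one_ne_zero (x := x) (y := 1) (by simpa using h)
  refine ⟨rfl, ?_⟩
  rw [norm_eq_zpow_neg_valuation hx, hv, valuation_one, neg_zero, zpow_zero]

theorem PadicInt.exists_pow_eq_of_norm_pow_sub_lt_one {l n : ℕ} [Fact l.Prime]
    (hn : l.Coprime n) {a y : ℤ_[l]} (hy : ‖y‖ = 1) (h : ‖y ^ n - a‖ < 1) :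
    ∃ z : ℤ_[l], z ^ n = a := by
  have hderiv : ‖(X ^ n - C a).derivative.aeval y‖ = 1 := by
    simpa [derivative_X_pow, hy] using hn
  obtain ⟨z, hz, -⟩ :=
    hensels_lemma (F := X ^ n - C a) (a := y) (by rw [hderiv, one_pow]; simpa using h)
  exact ⟨z, sub_eq_zero.mp (by simpa using hz)⟩

/-- Let `p, l` be primes with `p ∣ l - 1` and `α ∈ ℤ_[l]ˣ` a unit which is
not a `p`-th power in `ℤ_[l]`. Then the diagonal form
`x 0 ^ p + l * x 1 ^ p + ⋯ + l ^ (p-1) * x (p-1) ^ p` in `p` variables does not represent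
`α` over `ℚ_[l]`. -/
theorem stmt_12 (p l : ℕ) [Fact p.Prime] [Fact l.Prime] (hdvd : p ∣ l - 1)
    (α : ℤ_[l]ˣ) (hα : ¬ ∃ v : ℤ_[l], v ^ p = (α : ℤ_[l])) :
    ¬ ∃ x : Fin p → ℚ_[l],
        ∑ i : Fin p, (l : ℚ_[l]) ^ (i : ℕ) * x i ^ p = ((α : ℤ_[l]) : ℚ_[l]) := by
  rintro ⟨x, hx⟩
  have hlp : l.Coprime p := by
    have hl := (Fact.out : l.Prime).one_lt
    refine (Nat.coprime_primes Fact.out Fact.out).mpr ?_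
    rintro rfl
    have := Nat.le_of_dvd (by omega) hdvd
    omega
  set t : Fin p → ℚ_[l] := fun i ↦ (l : ℚ_[l]) ^ (i : ℕ) * x i ^ p
  have hα_norm : ‖((α : ℤ_[l]) : ℚ_[l])‖ = 1 := PadicInt.norm_units α
  have ht_inj : ∀ i j, t i ≠ 0 → ‖t i‖ = ‖t j‖ → i = j := fun i j hi hij ↦
    have hj : t j ≠ 0 := norm_ne_zero_iff.mp (hij ▸ norm_ne_zero_iff.mpr hi)
    Fin.ext (Padic.eq_and_valuation_eq_of_norm_natCast_pow_mul_pow_eq i.isLt j.isLt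
      (ne_zero_pow i.pos.ne' (right_ne_zero_of_mul hi))
      (ne_zero_pow i.pos.ne' (right_ne_zero_of_mul hj)) hij).1
  obtain ⟨i, hi⟩ := IsUltrametricDist.exists_norm_sum_sub_lt ht_inj
    (hx ▸ norm_ne_zero_iff.mp (by simp [hα_norm]))
  rw [hx] at hi
  have hti : ‖t i‖ = 1 := by
    rw [← norm_neg, ← hα_norm]
    refine (IsUltrametricDist.norm_eq_of_add_norm_lt_max ?_).symm
    simpa [← sub_eq_add_neg] using hi.trans_le (le_max_right _ _)
  obtain ⟨hi0, hxi⟩ :=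
    Padic.eq_zero_and_norm_eq_one_of_norm_natCast_pow_mul_pow_eq_one i.isLt hti
  refine hα <|
    PadicInt.exists_pow_eq_of_norm_pow_sub_lt_one hlp (y := (⟨x i, hxi.le⟩ : ℤ_[l])) hxi ?_
  change ‖x i ^ p - ((α : ℤ_[l]) : ℚ_[l])‖ < 1
  rw [norm_sub_rev]
  simpa [t, hi0, hxi] using hi
end
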